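/- Let κ > ℵ₀ be a cardinal. The Banach space c₀(ℕ, ℓ_n(κ)) (the c₀-sum over n ∈ ℕ of the spaces ℓ_n(κ)) has the κ-SSD2P. -/

import Mathlib

open Cardinal Metric Filter Topology NormedSpace
open scoped ENNReal
universe u
noncomputable section

/-- A Banach space `X` has the `κ`-SSD2P if for every set `A` of norm-one functionals of
cardinality `< κ` and every `ε > 0` there are `B ⊆ B_X` which `(1-ε)`-norms `A` and
`y ∈ B_X` with `B ± y ⊆ B_X` and `‖y‖ ≥ 1 - ε`. -/
def SSD2P (κ : Cardinal.{u}) (X : Type u) [NormedAddCommGroup X] [NormedSpace ℝ X] : Prop :=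
  ∀ A : Set (StrongDual ℝ X), (∀ f ∈ A, ‖f‖ = 1) → #A < κ → ∀ ε : ℝ, 0 < ε →
    ∃ (B : Set X) (y : X), B ⊆ closedBall 0 1 ∧ y ∈ closedBall (0 : X) 1 ∧ 1 - ε ≤ ‖y‖ ∧
      (∀ x ∈ B, x + y ∈ closedBall (0 : X) 1 ∧ x - y ∈ closedBall (0 : X) 1) ∧
      (∀ f ∈ A, ∃ x ∈ B, 1 - ε ≤ f x)

/-- The `c₀`-sum of a sequence of normed spaces, as a submodule of `lp X ∞`. -/
def c0Set (X : ℕ → Type u) [∀ n, NormedAddCommGroup (X n)] [∀ n, NormedSpace ℝ (X n)] :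
    Submodule ℝ (lp X ∞) where
  carrier := {x | Tendsto (fun n => ‖x n‖) atTop (𝓝 0)}
  zero_mem' := by simp [tendsto_const_nhds]
  add_mem' := by
    intro x y hx hy
    have h := hx.add hy
    simp only [add_zero] at h
    refine squeeze_zero (fun n => norm_nonneg _) (fun n => ?_) h
    simp [norm_add_le]
  smul_mem' := by
    intro c x hx
    have h := hx.const_mul (‖c‖)
    simp only [mul_zero] at h
    refine squeeze_zero (fun n => norm_nonneg _) (fun n => ?_) h
    simp [norm_smul, mul_comm]

/-- The `c₀`-sum `c₀(ℕ, Xₙ)` with the supremum norm. -/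
abbrev c0Sum (X : ℕ → Type u) [∀ n, NormedAddCommGroup (X n)] [∀ n, NormedSpace ℝ (X n)] :
    Type u :=
  (c0Set X : Submodule ℝ (lp X ∞))

instance (n : ℕ) : Fact (1 ≤ ((n + 1 : ℕ) : ℝ≥0∞)) :=
  ⟨by exact_mod_cast Nat.succ_le_succ (Nat.zero_le n)⟩

/-!
Fix `A` and `ε`, and pick `g_f` in the unit ball with `f g_f > 1 - ε/2` for each `f ∈ A`.
Every element of `ℓ_p(κ)`, `p < ∞`, has countable support, so the `g_f` are all supported in
fewer than `κ` coordinates of `κ` and there is a coordinate `μ` where all of them vanish. Choose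
`n` with `s := 2^(-1/(n+1)) > 1 - ε/2` and let `y` be `s δ_μ` in the block `ℓ_{n+1}(κ)`. In that
block, disjointness of supports gives `‖s g_f ± y‖^(n+1) ≤ s^(n+1) + s^(n+1) = 1`, while in the
other blocks `s g_f ± y` agrees with `s g_f`; so `B := {s g_f}` and `y` witness the SSD2P.
-/

theorem Cardinal.exists_forall_notMem_of_countable {α ι : Type u} {s : α → Set ι}
    (hs : ∀ a, (s a).Countable) (hα : #α < #ι) (hι : ℵ₀ < #ι) : ∃ i, ∀ a, i ∉ s a := by
  have hU : #(⋃ a, s a) < #ι := (mk_iUnion_le s).trans_lt <|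
    mul_lt_of_lt hι.le hα <| (ciSup_le' fun a => (hs a).le_aleph0).trans_lt hι
  obtain ⟨i, hi⟩ : ∃ i, i ∉ ⋃ a, s a := by
    by_contra! h
    exact hU.ne (by rw [Set.eq_univ_of_forall h, mk_univ])
  exact ⟨i, by simpa using hi⟩

namespace lp

variable {α : Type*} {E : α → Type*} [∀ i, NormedAddCommGroup (E i)] {p : ℝ≥0∞}

theorem countable_support_of_ne_top [Fact (1 ≤ p)] (hp : p ≠ ∞) (f : lp E p) :
    {i | f i ≠ 0}.Countable := by
  have hp0 : 0 < p.toReal := ENNReal.toReal_pos (zero_lt_one.trans_le Fact.out).ne' hp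
  refine ((memℓp_gen_iff hp0).1 f.prop).countable_support.mono fun i hi => ?_
  exact (Real.rpow_pos_of_pos (norm_pos_iff.2 hi) _).ne'

variable [DecidableEq α]

theorem norm_add_single_rpow (hp : 0 < p.toReal) {f : lp E p} {i : α} (hf : f i = 0) (x : E i) :
    ‖f + lp.single p i x‖ ^ p.toReal = ‖f‖ ^ p.toReal + ‖x‖ ^ p.toReal := by
  have hsum : HasSum (fun j => ‖f j‖ ^ p.toReal + if j = i then ‖x‖ ^ p.toReal else 0)
      (‖f‖ ^ p.toReal + ‖x‖ ^ p.toReal) :=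
    (hasSum_norm hp f).add (hasSum_ite_eq i _)
  refine (hasSum_norm hp _).unique (hsum.congr_fun fun j => ?_)
  rcases eq_or_ne j i with rfl | hj
  · simp [hf, Real.zero_rpow hp.ne']
  · simp [hj]

theorem norm_add_single_le_one [Fact (1 ≤ p)] (hp : 0 < p.toReal) {f : lp E p} {i : α}
    (hf : f i = 0) {x : E i} {r : ℝ} (hfr : ‖f‖ ≤ r) (hxr : ‖x‖ ≤ r) (hr : 2 * r ^ p.toReal ≤ 1) :
    ‖f + lp.single p i x‖ ≤ 1 := by
  have hf' := Real.rpow_le_rpow (norm_nonneg _) hfr hp.le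
  have hx' := Real.rpow_le_rpow (norm_nonneg _) hxr hp.le
  have h : ‖f + lp.single p i x‖ ^ p.toReal ≤ 1 ^ p.toReal := by
    rw [norm_add_single_rpow hp hf, Real.one_rpow]
    linarith
  exact (Real.rpow_le_rpow_iff (norm_nonneg _) zero_le_one hp).1 h

theorem norm_add_single_top_le (f : lp E ∞) (i : α) (x : E i) :
    ‖f + lp.single ∞ i x‖ ≤ max ‖f‖ ‖f i + x‖ := by
  refine norm_le_of_forall_le (le_max_of_le_left (norm_nonneg _)) fun j => ?_
  rcases eq_or_ne j i with rfl | hj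
  · simp
  · simpa [hj] using le_max_of_le_left (norm_apply_le_norm ENNReal.top_ne_zero f j)

end lp

theorem lp.exists_forall_apply_apply_eq_zero {α ι : Type u} {E : ι → Type*}
    [∀ i, NormedAddCommGroup (E i)] {q : ℕ → ℝ≥0∞} [∀ m, Fact (1 ≤ q m)] (hq : ∀ m, q m ≠ ∞)
    (g : α → lp (fun m => lp E (q m)) ∞) (hα : #α < #ι) (hι : ℵ₀ < #ι) :
    ∃ i, ∀ a m, g a m i = 0 := by
  obtain ⟨i, hi⟩ := Cardinal.exists_forall_notMem_of_countable
    (fun a => Set.countable_iUnion fun m => countable_support_of_ne_top (hq m) (g a m)) hα hι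
  exact ⟨i, fun a => by simpa using hi a⟩

section c0Sum

variable {X : ℕ → Type u} [∀ n, NormedAddCommGroup (X n)] [∀ n, NormedSpace ℝ (X n)]

theorem single_mem_c0Set (n : ℕ) (x : X n) : lp.single ∞ n x ∈ c0Set X := by
  refine tendsto_const_nhds.congr' (eventually_atTop.2 ⟨n + 1, fun m hm => ?_⟩)
  show (0 : ℝ) = ‖(lp.single ∞ n x : lp X ∞) m‖
  rw [lp.single_apply_ne ∞ n x (by omega : m ≠ n), norm_zero]

def c0Single (n : ℕ) (x : X n) : c0Sum X :=
  ⟨lp.single ∞ n x, single_mem_c0Set n x⟩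

theorem norm_c0Single (n : ℕ) (x : X n) : ‖c0Single n x‖ = ‖x‖ :=
  lp.norm_single (by simp) n x

theorem c0Single_neg (n : ℕ) (x : X n) : c0Single n (-x) = -c0Single n x :=
  Subtype.ext (lp.single_neg ∞ n x)

theorem norm_add_c0Single_le (x : c0Sum X) (n : ℕ) (w : X n) :
    ‖x + c0Single n w‖ ≤ max ‖x‖ ‖(x : lp X ∞) n + w‖ :=
  lp.norm_add_single_top_le _ n w

end c0Sum

theorem norm_smul_add_c0Single_single_le_one {ι : Type*} [DecidableEq ι] {E : ι → Type*}
    [∀ i, NormedAddCommGroup (E i)] [∀ i, NormedSpace ℝ (E i)] {q : ℕ → ℝ≥0∞}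
    [∀ m, Fact (1 ≤ q m)] {x : c0Sum fun m => lp E (q m)} (hx : ‖x‖ ≤ 1) {n : ℕ} {i : ι}
    (hxi : (x : lp (fun m => lp E (q m)) ∞) n i = 0) (hq : 0 < (q n).toReal) {s : ℝ}
    (hs0 : 0 ≤ s) (hs1 : s ≤ 1) (hsq : 2 * s ^ (q n).toReal ≤ 1) {w : E i} (hw : ‖w‖ ≤ s) :
    ‖s • x + c0Single n (lp.single (q n) i w)‖ ≤ 1 := by
  have hsx : ‖s • x‖ ≤ s := by
    rw [norm_smul, Real.norm_of_nonneg hs0]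
    exact mul_le_of_le_one_right hs0 hx
  refine (norm_add_c0Single_le _ n _).trans (max_le (hsx.trans hs1) ?_)
  refine lp.norm_add_single_le_one hq (by simp [hxi]) ?_ hw hsq
  exact (lp.norm_apply_le_norm ENNReal.top_ne_zero _ n).trans hsx

theorem exists_lt_pow_succ_eq_half {r : ℝ} (hr : r < 1) :
    ∃ (n : ℕ) (s : ℝ), r < s ∧ 0 ≤ s ∧ s ≤ 1 ∧ s ^ (n + 1) = 1 / 2 := by
  have h : Tendsto (fun n : ℕ => (1 / 2 : ℝ) ^ ((n + 1 : ℕ) : ℝ)⁻¹) atTop (𝓝 1) := by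
    have := (Real.continuousAt_const_rpow (by norm_num : (1 / 2 : ℝ) ≠ 0)).tendsto.comp
      (tendsto_one_div_add_atTop_nhds_zero_nat (𝕜 := ℝ))
    simpa [Function.comp_def] using this
  obtain ⟨n, hn⟩ := (h.eventually (lt_mem_nhds hr)).exists
  exact ⟨n, _, hn, by positivity, Real.rpow_le_one (by norm_num) (by norm_num) (by positivity),
    Real.rpow_inv_natCast_pow (by norm_num) n.succ_ne_zero⟩

theorem ContinuousLinearMap.exists_norm_le_one_lt_apply {E : Type*} [NormedAddCommGroup E]
    [NormedSpace ℝ E] (f : StrongDual ℝ E) {r : ℝ} (hr : r < ‖f‖) : ∃ x, ‖x‖ ≤ 1 ∧ r < f x := by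
  obtain ⟨x, hx1, hx⟩ := f.exists_lt_apply_of_lt_opNorm hr
  rcases le_or_gt 0 (f x) with h | h
  · exact ⟨x, hx1.le, by rwa [Real.norm_of_nonneg h] at hx⟩
  · refine ⟨-x, by rw [norm_neg]; exact hx1.le, ?_⟩
    rwa [map_neg, ← Real.norm_of_nonpos h.le]

/-- For `κ > ℵ₀`, the `c₀`-sum `c₀(ℕ, ℓ_n(κ))` has the `κ`-SSD2P. -/
theorem c0Sum_lp_SSD2P {ι : Type u} (κ : Cardinal.{u}) (hκ : ℵ₀ < κ) (hι : #ι = κ) :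
    SSD2P κ (c0Sum (fun n => lp (fun _ : ι => ℝ) ((n + 1 : ℕ) : ℝ≥0∞))) := by
  classical
  subst hι
  intro A hA hAκ ε hε
  obtain ⟨n, s, hsε, hs0, hs1, hsn⟩ := exists_lt_pow_succ_eq_half (by linarith : 1 - ε / 2 < 1)
  have hsp : 2 * s ^ ((n + 1 : ℕ) : ℝ≥0∞).toReal ≤ 1 := by
    rw [ENNReal.toReal_natCast, Real.rpow_natCast, hsn]; norm_num
  choose g hg1 hg2 using fun f : A =>
    f.1.exists_norm_le_one_lt_apply (r := 1 - ε / 2) (by rw [hA f f.2]; linarith)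
  obtain ⟨μ, hgμ⟩ := lp.exists_forall_apply_apply_eq_zero (fun m => ENNReal.natCast_ne_top _)
    (fun f => (g f).1) hAκ hκ
  let X : ℕ → Type u := fun m => lp (fun _ : ι => ℝ) ((m + 1 : ℕ) : ℝ≥0∞)
  have hB : ∀ c : ℝ, |c| = s → ∀ f, ‖s • g f + c0Single (X := X) n (lp.single _ μ c)‖ ≤ 1 :=
    fun c hc f => norm_smul_add_c0Single_single_le_one (hg1 f) (hgμ f n)
      (by rw [ENNReal.toReal_natCast]; positivity) hs0 hs1 hsp (by rw [Real.norm_eq_abs, hc])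
  have hy : ‖c0Single (X := X) n (lp.single _ μ s)‖ = s := by
    rw [norm_c0Single, lp.norm_single (by simp), Real.norm_of_nonneg hs0]
  refine ⟨Set.range fun f => s • g f, c0Single (X := X) n (lp.single _ μ s), ?_, ?_, ?_, ?_, ?_⟩
  · rintro _ ⟨f, rfl⟩
    simpa [norm_smul, abs_of_nonneg hs0] using mul_le_one₀ hs1 (norm_nonneg _) (hg1 f)
  · rwa [mem_closedBall_zero_iff, hy]
  · linarith
  · rintro _ ⟨f, rfl⟩
    rw [mem_closedBall_zero_iff, mem_closedBall_zero_iff, sub_eq_add_neg, ← c0Single_neg,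
      ← lp.single_neg]
    exact ⟨hB s (abs_of_nonneg hs0) f, hB (-s) (by rw [abs_neg, abs_of_nonneg hs0]) f⟩
  · intro f hf
    refine ⟨_, ⟨⟨f, hf⟩, rfl⟩, ?_⟩
    have hgf := hg2 ⟨f, hf⟩
    rw [map_smul, smul_eq_mul]
    nlinarith [mul_nonneg (sub_nonneg.2 hs1) (by linarith : (0 : ℝ) ≤ ε / 2)]
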